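/- Let X be a finite-dimensional normed space and x ∈ X \ {0}. The following are equivalent: (a) the norm is Gâteaux differentiable at x; (b) the norm is Fréchet differentiable at x; (c) the Birkhoff orthogonal complement x^⊥ = {y ∈ X : ‖x + λy‖ ≥ ‖x‖ for all λ ∈ ℝ} is a hyperplane (a linear subspace of codimension 1). -/

import Mathlib

/-!
Gâteaux implies Fréchet because the norm is Lipschitz and `X` is finite-dimensional, so
directional derivatives given by one continuous linear map control the remainder uniformly on
the compact unit sphere.

For the Birkhoff complement, look at the convex functions `φ_y t = ‖x + t • y‖`. A slope `c`
of a supporting line of `φ_y` at `0` extends to a linear functional on `span {x, y}` that is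
dominated by the norm and takes the value `‖x‖` at `x`, hence `y - (c / ‖x‖) • x ∈ x^⊥`.
If `x^⊥` is a subspace `H`, then `x ∉ H` and a functional `g` vanishing on `H` with `g x ≠ 0`
pins down `c = ‖x‖ * g y / g x`. So every `φ_y` has a unique supporting slope at `0`, and a
convex function of one variable with a unique supporting slope is differentiable there.
Conversely, if `f` is the Gâteaux derivative, then `x^⊥ = ker f` and `f x = ‖x‖ ≠ 0`.
-/

/-- Gâteaux differentiability of the norm at `x`: there is a linear functional `f`
giving all directional derivatives of the norm at `x`. -/
def GateauxDifferentiableNormAt (X : Type*) [NormedAddCommGroup X] [NormedSpace ℝ X]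
    (x : X) : Prop :=
  ∃ f : X →ₗ[ℝ] ℝ, ∀ y : X, HasDerivAt (fun t : ℝ => ‖x + t • y‖) (f y) 0

open Set Filter

def IsSubgradientAt (φ : ℝ → ℝ) (a c : ℝ) : Prop := ∀ t, φ a + c * (t - a) ≤ φ t

namespace ConvexOn

variable {φ : ℝ → ℝ} {a c : ℝ}

lemma isSubgradientAt_of_hasDerivAt (hφ : ConvexOn ℝ univ φ) (h : HasDerivAt φ c a) :
    IsSubgradientAt φ a c := by
  intro t
  rcases lt_trichotomy t a with hta | rfl | hat
  · have := hφ.slope_le_of_hasDerivAt (mem_univ t) (mem_univ a) hta h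
    rw [slope_def_field, div_le_iff₀ (sub_pos.2 hta)] at this
    linarith
  · simp
  · have := hφ.le_slope_of_hasDerivAt (mem_univ a) (mem_univ t) hat h
    rw [slope_def_field, le_div_iff₀ (sub_pos.2 hat)] at this
    linarith

lemma isSubgradientAt_rightDeriv (hφ : ConvexOn ℝ univ φ) :
    IsSubgradientAt φ a (derivWithin φ (Ioi a) a) := by
  have ha : a ∈ interior univ := by simp
  intro t
  rcases lt_trichotomy t a with hta | rfl | hat
  · have h₁ := hφ.slope_le_leftDeriv_of_mem_interior (mem_univ t) ha hta
    have h₂ := hφ.leftDeriv_le_rightDeriv_of_mem_interior ha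
    rw [slope_def_field, div_le_iff₀ (sub_pos.2 hta)] at h₁
    linarith [mul_le_mul_of_nonneg_right h₂ (sub_pos.2 hta).le]
  · simp
  · have := hφ.rightDeriv_le_slope_of_mem_interior ha (mem_univ t) hat
    rw [slope_def_field, le_div_iff₀ (sub_pos.2 hat)] at this
    linarith

lemma isSubgradientAt_leftDeriv (hφ : ConvexOn ℝ univ φ) :
    IsSubgradientAt φ a (derivWithin φ (Iio a) a) := by
  have ha : a ∈ interior univ := by simp
  intro t
  rcases lt_trichotomy t a with hta | rfl | hat
  · have := hφ.slope_le_leftDeriv_of_mem_interior (mem_univ t) ha hta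
    rw [slope_def_field, div_le_iff₀ (sub_pos.2 hta)] at this
    linarith
  · simp
  · have h₁ := hφ.rightDeriv_le_slope_of_mem_interior ha (mem_univ t) hat
    have h₂ := hφ.leftDeriv_le_rightDeriv_of_mem_interior ha
    rw [slope_def_field, le_div_iff₀ (sub_pos.2 hat)] at h₁
    linarith [mul_le_mul_of_nonneg_right h₂ (sub_pos.2 hat).le]

lemma hasDerivAt_of_isSubgradientAt_unique (hφ : ConvexOn ℝ univ φ)
    (h : ∀ c', IsSubgradientAt φ a c' → c' = c) : HasDerivAt φ c a := by
  have ha : a ∈ interior univ := by simp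
  have hL := hφ.hasDerivWithinAt_leftDeriv_of_mem_interior ha
  have hR := hφ.hasDerivWithinAt_rightDeriv_of_mem_interior ha
  rw [h _ hφ.isSubgradientAt_leftDeriv, hasDerivWithinAt_iff_tendsto_slope' self_notMem_Iio] at hL
  rw [h _ hφ.isSubgradientAt_rightDeriv, hasDerivWithinAt_iff_tendsto_slope' self_notMem_Ioi] at hR
  exact hasDerivAt_iff_tendsto_slope_left_right.2 ⟨hL, hR⟩

end ConvexOn

section NormedSpace

variable {X : Type*} [NormedAddCommGroup X] [NormedSpace ℝ X]

def birkhoffOrth (x : X) : Set X := {y | ∀ l : ℝ, ‖x‖ ≤ ‖x + l • y‖}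

lemma self_notMem_birkhoffOrth {x : X} (hx : x ≠ 0) : x ∉ birkhoffOrth x := by
  intro h
  simpa [hx] using h (-1)

lemma convexOn_norm_add_smul (x y : X) : ConvexOn ℝ univ (fun t : ℝ => ‖x + t • y‖) := by
  simpa [Function.comp_def, add_comm] using (convexOn_norm (E := X) convex_univ).comp_affineMap
    ((LinearMap.toSpanSingleton ℝ X y).toAffineMap + AffineMap.const ℝ ℝ x)

lemma isSubgradientAt_zero_norm_add_smul_iff {x y : X} {c : ℝ} :
    IsSubgradientAt (fun t : ℝ => ‖x + t • y‖) 0 c ↔ ∀ t : ℝ, ‖x‖ + c * t ≤ ‖x + t • y‖ := by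
  simp [IsSubgradientAt]

lemma mul_norm_add_mul_le_norm_smul_add_smul {x y : X} {c : ℝ}
    (h : ∀ t : ℝ, ‖x‖ + c * t ≤ ‖x + t • y‖) (a b : ℝ) :
    a * ‖x‖ + c * b ≤ ‖a • x + b • y‖ := by
  have hpos : ∀ a > 0, a * ‖x‖ + c * b ≤ ‖a • x + b • y‖ := by
    intro a ha
    have hxy : a • x + b • y = a • (x + (b / a) • y) := by
      rw [smul_add, smul_smul, mul_div_cancel₀ _ ha.ne']
    have := mul_le_mul_of_nonneg_left (h (b / a)) ha.le
    rw [mul_add, mul_left_comm, mul_div_cancel₀ _ ha.ne'] at this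
    rwa [hxy, norm_smul, Real.norm_of_nonneg ha.le]
  -- for `a ≤ 0`, pass to the coefficient `|a| + 1 > 0` at the cost of `(|a| + 1 - a) * ‖x‖`
  set a₁ := |a| + 1
  have hshift : a₁ • x + b • y = (a • x + b • y) + (a₁ - a) • x := by
    rw [sub_smul]; abel
  have htri := norm_add_le (a • x + b • y) ((a₁ - a) • x)
  rw [← hshift, norm_smul, Real.norm_of_nonneg (by linarith [le_abs_self a])] at htri
  linarith [hpos a₁ (by positivity)]

lemma sub_smul_mem_birkhoffOrth {x y : X} (hx : x ≠ 0) {c : ℝ}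
    (h : ∀ t : ℝ, ‖x‖ + c * t ≤ ‖x + t • y‖) : y - (c / ‖x‖) • x ∈ birkhoffOrth x := by
  intro l
  have hxy : x + l • (y - (c / ‖x‖) • x) = (1 - l * (c / ‖x‖)) • x + l • y := by
    rw [smul_sub, smul_smul, sub_smul, one_smul]; abel
  have hx' : ‖x‖ ≠ 0 := norm_ne_zero_iff.2 hx
  rw [hxy]
  convert mul_norm_add_mul_le_norm_smul_add_smul h (1 - l * (c / ‖x‖)) l using 1
  field_simp
  ring

theorem gateauxDifferentiableNormAt_iff_differentiableAt [FiniteDimensional ℝ X] {x : X} :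
    GateauxDifferentiableNormAt X x ↔ DifferentiableAt ℝ (fun z : X => ‖z‖) x := by
  constructor
  · rintro ⟨f, hf⟩
    exact (lipschitzWith_one_norm.hasFDerivAt_of_hasLineDerivAt_of_closure (s := univ)
      (by simp) (L := LinearMap.toContinuousLinearMap f) fun v _ => hf v).differentiableAt
  · intro h
    exact ⟨(fderiv ℝ _ x).toLinearMap, fun y => h.hasFDerivAt.hasLineDerivAt y⟩

section HasDerivAt

variable {x : X} {f : X →ₗ[ℝ] ℝ} (hf : ∀ y, HasDerivAt (fun t : ℝ => ‖x + t • y‖) (f y) 0)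
include hf

lemma norm_add_mul_le_of_hasDerivAt (y : X) (t : ℝ) : ‖x‖ + f y * t ≤ ‖x + t • y‖ :=
  isSubgradientAt_zero_norm_add_smul_iff.1
    ((convexOn_norm_add_smul x y).isSubgradientAt_of_hasDerivAt (hf y)) t

lemma apply_self_eq_norm_of_hasDerivAt : f x = ‖x‖ := by
  have h₁ := norm_add_mul_le_of_hasDerivAt hf x 1
  have h₂ := norm_add_mul_le_of_hasDerivAt hf x (-1)
  norm_num [← sub_eq_add_neg] at h₁ h₂
  rw [← two_smul ℝ x, norm_smul] at h₁
  norm_num at h₁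
  linarith

lemma birkhoffOrth_eq_ker_of_hasDerivAt : birkhoffOrth x = LinearMap.ker f := by
  ext y
  refine ⟨fun hy => ?_, fun hy l => ?_⟩
  · have hmin : IsLocalMin (fun t : ℝ => ‖x + t • y‖) 0 :=
      Eventually.of_forall fun t => by simpa using hy t
    exact hmin.hasDerivAt_eq_zero (hf y)
  · simpa [LinearMap.mem_ker.1 hy] using norm_add_mul_le_of_hasDerivAt hf y l

end HasDerivAt

lemma GateauxDifferentiableNormAt.exists_hyperplane_eq_birkhoffOrth [FiniteDimensional ℝ X] {x : X}
    (hx : x ≠ 0) (h : GateauxDifferentiableNormAt X x) :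
    ∃ H : Submodule ℝ X, Module.finrank ℝ H + 1 = Module.finrank ℝ X ∧ birkhoffOrth x = H := by
  obtain ⟨f, hf⟩ := h
  have hf0 : f ≠ 0 := fun h0 => by
    simpa [h0, eq_comm, hx] using apply_self_eq_norm_of_hasDerivAt hf
  exact ⟨LinearMap.ker f, Module.Dual.finrank_ker_add_one_of_ne_zero hf0,
    birkhoffOrth_eq_ker_of_hasDerivAt hf⟩

lemma gateauxDifferentiableNormAt_of_birkhoffOrth_eq {x : X} (hx : x ≠ 0) {H : Submodule ℝ X}
    (hH : birkhoffOrth x = H) : GateauxDifferentiableNormAt X x := by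
  have hxH : x ∉ H := by
    rw [← SetLike.mem_coe, ← hH]; exact self_notMem_birkhoffOrth hx
  obtain ⟨g, hgx, hgH⟩ := H.exists_dual_map_eq_bot_of_notMem hxH inferInstance
  refine ⟨(‖x‖ / g x) • g, fun y => ?_⟩
  refine (convexOn_norm_add_smul x y).hasDerivAt_of_isSubgradientAt_unique fun c hc => ?_
  have hmem : y - (c / ‖x‖) • x ∈ H := by
    rw [← SetLike.mem_coe, ← hH]
    exact sub_smul_mem_birkhoffOrth hx (isSubgradientAt_zero_norm_add_smul_iff.1 hc)
  have hg : g (y - (c / ‖x‖) • x) = 0 := (Submodule.eq_bot_iff _).1 hgH _ ⟨_, hmem, rfl⟩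
  have hx' : ‖x‖ ≠ 0 := norm_ne_zero_iff.2 hx
  simp only [map_sub, map_smul, smul_eq_mul, sub_eq_zero] at hg
  simp only [LinearMap.smul_apply, smul_eq_mul, hg]
  field_simp

end NormedSpace

/-- Lemma `GatoBir`, pointwise version. Let `X` be a
finite-dimensional real normed space and `x ≠ 0`. The following are equivalent:
(a) the norm is Gâteaux differentiable at `x`; (b) the norm is Fréchet differentiable
at `x`; (c) the Birkhoff orthogonal complement
`x^⊥ = {y : ‖x + λ • y‖ ≥ ‖x‖ for all λ}` is a hyperplane (a linear subspace of
codimension one). -/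
theorem stmt17 {X : Type*} [NormedAddCommGroup X] [NormedSpace ℝ X]
    [FiniteDimensional ℝ X] (x : X) (hx : x ≠ 0) :
    (GateauxDifferentiableNormAt X x ↔ DifferentiableAt ℝ (fun z : X => ‖z‖) x) ∧
    (GateauxDifferentiableNormAt X x ↔
      ∃ H : Submodule ℝ X, Module.finrank ℝ H + 1 = Module.finrank ℝ X ∧
        {y : X | ∀ l : ℝ, ‖x + l • y‖ ≥ ‖x‖} = (H : Set X)) :=
  ⟨gateauxDifferentiableNormAt_iff_differentiableAt,
    fun h => h.exists_hyperplane_eq_birkhoffOrth hx,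
    fun ⟨_, _, hH⟩ => gateauxDifferentiableNormAt_of_birkhoffOrth_eq hx hH⟩
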